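/- arXiv:2312.03529 — 7 statements merged into one kernel-verified Lean document; each statement's English description precedes it below -/
import Mathlib

section
/- Let X be a submetrizable space and F a relatively pseudocompact subset of X. Then for any two coarser metrizable topologies σ₁, σ₂ on X, the closure of F in (X, σ₁) equals the closure of F in (X, σ₂). -/
universe u

def Submetrizable (X : Type u) [t : TopologicalSpace X] : Prop :=
  ∃ σ : TopologicalSpace X, t ≤ σ ∧ @TopologicalSpace.MetrizableSpace X σ

/-- `F` is relatively pseudocompact in `X` if every continuous real-valued function
on `X` is bounded on `F`. -/
def RelPseudocompact {X : Type u} [TopologicalSpace X] (F : Set X) : Prop :=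
  ∀ g : X → ℝ, Continuous g → ∃ M : ℝ, ∀ x ∈ F, |g x| ≤ M

/-!
Write `σ` for the topology generated by `σ₁` and `σ₂`; in Mathlib's order, where finer topologies
are smaller, this is `σ₁ ⊓ σ₂`. It is metrizable, being induced by the diagonal embedding into
`(X, σ₁) × (X, σ₂)`, and still coarser than the topology of `X`, so `F` is relatively
pseudocompact in `(X, σ)`. In a metrizable space a relatively pseudocompact set has compact
closure: a sequence in `F` without cluster points carries a locally finite family of bumps of
growing heights, whose sum is continuous and unbounded on `F`. So the `σ`-closure of `F` is
compact, hence closed in each Hausdorff topology `σᵢ` coarser than `σ`, and it is therefore the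
`σᵢ`-closure of `F`.
-/

open Filter Topology Metric TopologicalSpace

theorem TopologicalSpace.metrizableSpace_inf {X : Type*} {σ₁ σ₂ : TopologicalSpace X}
    (hm₁ : @MetrizableSpace X σ₁) (hm₂ : @MetrizableSpace X σ₂) :
    @MetrizableSpace X (σ₁ ⊓ σ₂) := by
  let := σ₁ ⊓ σ₂
  let : TopologicalSpace (X × X) := @instTopologicalSpaceProd X X σ₁ σ₂
  have hdiag : IsEmbedding fun x : X => (x, x) := by
    refine ⟨⟨?_⟩, fun a b h => congrArg Prod.fst h⟩
    change σ₁ ⊓ σ₂ = ((σ₁.induced Prod.fst) ⊓ (σ₂.induced Prod.snd)).induced fun x : X => (x, x)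
    rw [induced_inf, induced_compose, induced_compose]
    exact (congrArg₂ (· ⊓ ·) (@induced_id X σ₁) (@induced_id X σ₂)).symm
  exact @IsEmbedding.metrizableSpace X (X × X) _ _
    (@metrizableSpace_prod X X σ₁ σ₂ hm₁ hm₂) _ hdiag

theorem closure_eq_of_le_of_isCompact_closure {X : Type*} {s t : TopologicalSpace X}
    [@T2Space X t] (h : s ≤ t) {F : Set X} (hK : @IsCompact X s (closure[s] F)) :
    closure[t] F = closure[s] F := by
  have hK' : @IsCompact X t (closure[s] F) := by
    simpa using @IsCompact.image X X s t _ _ hK (continuous_id_of_le h)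
  exact (@closure_minimal X t _ _ (@subset_closure X s F) hK'.isClosed).antisymm (closure.mono h)

theorem exists_continuous_forall_le_of_locallyFinite_ball {ι X : Type*} [PseudoMetricSpace X]
    {y : ι → X} {r : ι → ℝ} (hr : ∀ i, 0 < r i) (hlf : LocallyFinite fun i => ball (y i) (r i))
    (c : ι → ℝ) : ∃ g : X → ℝ, Continuous g ∧ ∀ i, c i ≤ g (y i) := by
  set bump : ι → X → ℝ := fun i z => |c i| * max 0 (1 - dist z (y i) / r i)
  have bump_nonneg (i : ι) (z : X) : 0 ≤ bump i z := by positivity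
  have support_bump (i : ι) : Function.support (bump i) ⊆ ball (y i) (r i) := by
    intro z hz
    by_contra hzi
    have : 1 ≤ dist z (y i) / r i := by
      rw [le_div_iff₀ (hr i)]; simpa using hzi
    exact hz (by simp [bump, max_eq_left (by linarith : 1 - dist z (y i) / r i ≤ 0)])
  refine ⟨fun z => ∑ᶠ i, bump i z, continuous_finsum (fun i => by fun_prop)
    (hlf.subset support_bump), fun i => ?_⟩
  calc c i ≤ bump i (y i) := by simp [bump, le_abs_self]
    _ ≤ ∑ᶠ j, bump j (y i) :=
      single_le_finsum i ((hlf.subset support_bump).point_finite (y i)) (bump_nonneg · _)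

theorem locallyFinite_ball_of_forall_not_mapClusterPt {X : Type*} [PseudoMetricSpace X]
    {y : ℕ → X} (hy : ∀ a, ¬MapClusterPt a atTop y) :
    LocallyFinite fun n => ball (y n) (1 / (n + 1)) := by
  intro z
  obtain ⟨s, hs, hys⟩ : ∃ s ∈ 𝓝 z, ∀ᶠ n in atTop, y n ∉ s := by
    simpa [mapClusterPt_iff_frequently] using hy z
  obtain ⟨ε, hε, hball⟩ := Metric.mem_nhds_iff.mp hs
  refine ⟨ball z (ε / 2), ball_mem_nhds z (half_pos hε), ?_⟩
  have hr : ∀ᶠ n : ℕ in atTop, 1 / ((n : ℝ) + 1) < ε / 2 :=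
    tendsto_one_div_add_atTop_nhds_zero_nat.eventually (gt_mem_nhds (half_pos hε))
  rw [← Nat.cofinite_eq_atTop] at hys hr
  refine (eventually_cofinite.mp (hys.and hr)).subset fun n ⟨w, hwn, hwz⟩ ⟨hyn, hn⟩ => ?_
  refine hyn (hball ?_)
  calc dist (y n) z ≤ dist w (y n) + dist w z := dist_triangle_left _ _ _
    _ < ε / 2 + ε / 2 := add_lt_add (hwn.trans hn) hwz
    _ = ε := add_halves ε

theorem RelPseudocompact.mono {X : Type u} {s t : TopologicalSpace X} (h : s ≤ t) {F : Set X}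
    (hF : @RelPseudocompact X s F) : @RelPseudocompact X t F :=
  fun g hg => hF g (continuous_le_dom h hg)

theorem RelPseudocompact.closure {X : Type u} [TopologicalSpace X] {F : Set X}
    (hF : RelPseudocompact F) : RelPseudocompact (closure F) := fun g hg =>
  (hF g hg).imp fun _ hM =>
    closure_minimal hM (isClosed_le (continuous_abs.comp hg) continuous_const)

theorem RelPseudocompact.exists_mapClusterPt {X : Type u} [TopologicalSpace X]
    [PseudoMetrizableSpace X] {F : Set X} (hF : RelPseudocompact F) {y : ℕ → X}
    (hy : ∀ᶠ n in atTop, y n ∈ F) : ∃ a, MapClusterPt a atTop y := by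
  let := pseudoMetrizableSpacePseudoMetric X
  by_contra! hy_clust
  obtain ⟨g, hg, hgy⟩ := exists_continuous_forall_le_of_locallyFinite_ball
    (fun n => Nat.one_div_pos_of_nat) (locallyFinite_ball_of_forall_not_mapClusterPt hy_clust)
    (fun n => n)
  obtain ⟨M, hM⟩ := hF g hg
  obtain ⟨n, hnF, hn⟩ := (hy.and (tendsto_natCast_atTop_atTop.eventually_gt_atTop M)).exists
  exact hn.not_ge ((hgy n).trans ((le_abs_self _).trans (hM _ hnF)))

theorem RelPseudocompact.isCompact_closure {X : Type u} [TopologicalSpace X]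
    [PseudoMetrizableSpace X] {F : Set X} (hF : RelPseudocompact F) :
    IsCompact (_root_.closure F) :=
  have hcc : IsCountablyCompact (_root_.closure F) :=
    .of_seq_clusterPt fun _ hx => (hF.closure.exists_mapClusterPt hx).imp fun _ ha =>
      ⟨isClosed_closure.mem_of_mapClusterPt ha hx, ha⟩
  hcc.isSeqCompact.isCompact

theorem closure_eq_of_relPseudocompact_general {X : Type u} [t : TopologicalSpace X]
    (F : Set X) (hF : RelPseudocompact F)
    (σ₁ σ₂ : TopologicalSpace X) (h₁ : t ≤ σ₁) (h₂ : t ≤ σ₂)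
    (hm₁ : @TopologicalSpace.MetrizableSpace X σ₁)
    (hm₂ : @TopologicalSpace.MetrizableSpace X σ₂) :
    @closure X σ₁ F = @closure X σ₂ F := by
  have hK : @IsCompact X (σ₁ ⊓ σ₂) (closure[σ₁ ⊓ σ₂] F) :=
    @RelPseudocompact.isCompact_closure X (σ₁ ⊓ σ₂)
      (metrizableSpace_inf hm₁ hm₂).toPseudoMetrizableSpace F (hF.mono (le_inf h₁ h₂))
  have hT₁ := @t2Space_of_metrizableSpace X σ₁ hm₁
  have hT₂ := @t2Space_of_metrizableSpace X σ₂ hm₂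
  exact (@closure_eq_of_le_of_isCompact_closure X (σ₁ ⊓ σ₂) σ₁ hT₁ inf_le_left F hK).trans
    (@closure_eq_of_le_of_isCompact_closure X (σ₁ ⊓ σ₂) σ₂ hT₂ inf_le_right F hK).symm

/-- If `X` is submetrizable and `F ⊆ X` is relatively pseudocompact, then the closure of `F`
is the same in all coarser metrizable topologies on `X`. -/
theorem closure_eq_of_relPseudocompact {X : Type u} [t : TopologicalSpace X]
    (hX : Submetrizable X) (F : Set X) (hF : RelPseudocompact F)
    (σ₁ σ₂ : TopologicalSpace X) (h₁ : t ≤ σ₁) (h₂ : t ≤ σ₂)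
    (hm₁ : @TopologicalSpace.MetrizableSpace X σ₁)
    (hm₂ : @TopologicalSpace.MetrizableSpace X σ₂) :
    @closure X σ₁ F = @closure X σ₂ F :=
  closure_eq_of_relPseudocompact_general (t := t) F hF σ₁ σ₂ h₁ h₂ hm₁ hm₂
end

section
/- Let f : X → Y be a closed continuous surjection and let y ∈ Y be a q-point. Then the boundary of f⁻¹(y) in X is relatively pseudocompact. -/
universe u v

/-- `y` is a q-point: there is a sequence of open neighbourhoods `U i` of `y` such that any
choice of pairwise distinct points `x i ∈ U i` has an accumulation point. -/
def IsQPoint {Y : Type v} [TopologicalSpace Y] (y : Y) : Prop :=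
  ∃ U : ℕ → Set Y, (∀ i, IsOpen (U i) ∧ y ∈ U i) ∧
    ∀ x : ℕ → Y, (∀ i, x i ∈ U i) → Function.Injective x →
      ∃ p : Y, p ∈ closure (Set.range x \ {p})

/-!
Suppose a continuous `g` is unbounded on the boundary of the fiber `F = f⁻¹(y)`. Near a boundary
point `x` with `|g x| > n` there are points outside `F` whose images avoid any prescribed finite
set, so we can pick `w n` with `|g (w n)| > n` and `f (w n) ∈ U n` pairwise distinct. The q-point
property gives an accumulation point `p` of the `f (w n)`. But since `|g|` blows up along `w`, every
set of the `w n` is closed, so its image under the closed map `f` is closed: the set of the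
`f (w n)` different from `p` is closed and cannot accumulate at `p`.
-/

open Set Filter Topology Function

theorem exists_injective_forall_mem {α : Type*} {A : ℕ → Set α} (hA : ∀ n, (A n).Infinite) :
    ∃ a : ℕ → α, (∀ n, a n ∈ A n) ∧ Injective a := by
  -- Choosing `a n` outside the earlier values makes `a` injective, so the earlier values are
  -- `n` many and `ncard` recovers the index.
  obtain ⟨a, ha⟩ := seq_of_forall_finite_exists (P := fun c t => c ∈ A t.ncard ∧ c ∉ t)
    fun t ht => ((hA t.ncard).sdiff ht).nonempty
  have hinj : Injective a :=
    .of_lt_imp_ne fun m n hmn hmn' => (ha n).2 ⟨m, hmn, hmn'⟩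
  refine ⟨a, fun n => ?_, hinj⟩
  simpa [ncard_image_of_injective _ hinj] using (ha n).1

theorem locallyFinite_singleton_of_tendsto_abs {X : Type*} [TopologicalSpace X] {g : X → ℝ}
    (hg : Continuous g) {w : ℕ → X} (hw : Tendsto (fun n => |g (w n)|) atTop atTop) :
    LocallyFinite fun n => ({w n} : Set X) := by
  intro x
  refine ⟨{z | |g z| < |g x| + 1}, (isOpen_lt hg.abs continuous_const).mem_nhds (by simp), ?_⟩
  have hfar := hw.eventually_ge_atTop (|g x| + 1)
  rw [← Nat.cofinite_eq_atTop, eventually_cofinite] at hfar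
  refine hfar.subset fun n hn => ?_
  obtain ⟨_, rfl, hlt⟩ := hn
  exact not_le.mpr hlt

theorem LocallyFinite.isClosed_image_singleton {X : Type*} [TopologicalSpace X] [T1Space X]
    {w : ℕ → X} (hw : LocallyFinite fun n => ({w n} : Set X)) (I : Set ℕ) :
    IsClosed (w '' I) := by
  rw [image_eq_range, ← iUnion_singleton_eq_range]
  exact (hw.comp_injective Subtype.val_injective).isClosed_iUnion fun _ => isClosed_singleton

theorem IsClosedMap.notMem_closure_range_comp_diff {X Y : Type*} [TopologicalSpace X]
    [T1Space X] [TopologicalSpace Y] {f : X → Y} (hf : IsClosedMap f) {w : ℕ → X}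
    (hw : LocallyFinite fun n => ({w n} : Set X)) (p : Y) :
    p ∉ closure (range (f ∘ w) \ {p}) := by
  have himage : range (f ∘ w) \ {p} = f '' (w '' {n | f (w n) ≠ p}) := by
    ext q
    constructor
    · rintro ⟨⟨n, rfl⟩, hne⟩
      exact ⟨w n, ⟨n, hne, rfl⟩, rfl⟩
    · rintro ⟨_, ⟨n, hne, rfl⟩, rfl⟩
      exact ⟨⟨n, rfl⟩, hne⟩
  rw [himage, (hf _ (hw.isClosed_image_singleton _)).closure_eq, ← himage]
  exact fun h => h.2 rfl

theorem infinite_image_of_mem_frontier_preimage_singleton {X Y : Type*} [TopologicalSpace X]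
    [TopologicalSpace Y] [T1Space Y] {f : X → Y} (hf : Continuous f) {y : Y} {x : X}
    (hx : x ∈ frontier (f ⁻¹' {y})) {W : Set X} (hW : W ∈ 𝓝 x) : (f '' W).Infinite := by
  intro hfin
  have hxy : f x = y := (isClosed_singleton.preimage hf).frontier_subset hx
  have hxT : f x ∉ f '' W \ {y} := fun h => h.2 hxy
  have hnhds : W ∩ f ⁻¹' (f '' W \ {y})ᶜ ∈ 𝓝 x := inter_mem hW
    (hf.continuousAt.preimage_mem_nhds (hfin.sdiff.isClosed.isOpen_compl.mem_nhds hxT))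
  obtain ⟨z, ⟨hzW, hzT⟩, hzy⟩ :=
    mem_closure_iff_nhds.mp (frontier_subset_closure (frontier_compl (f ⁻¹' {y}) ▸ hx)) _ hnhds
  exact hzT ⟨mem_image_of_mem f hzW, hzy⟩

theorem relPseudocompact_frontier_fiber_general {X : Type u} {Y : Type v}
    [TopologicalSpace X] [TopologicalSpace Y] [T1Space X] [T1Space Y]
    (f : X → Y) (hf : Continuous f)
    (hclosed : IsClosedMap f) (y : Y) (hy : IsQPoint y) :
    RelPseudocompact (frontier (f ⁻¹' {y})) := by
  obtain ⟨U, hU, hacc⟩ := hy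
  intro g hg
  by_contra! hunbdd
  choose x hxF hxg using fun n : ℕ => hunbdd n
  have hxy : ∀ n, f (x n) = y := fun n => (isClosed_singleton.preimage hf).frontier_subset (hxF n)
  have hA : ∀ n : ℕ, (f '' (f ⁻¹' U n ∩ {z | (n : ℝ) < |g z|})).Infinite := fun n =>
    infinite_image_of_mem_frontier_preimage_singleton hf (hxF n) <| inter_mem
      (hf.continuousAt.preimage_mem_nhds ((hU n).1.mem_nhds ((hxy n).symm ▸ (hU n).2)))
      ((isOpen_lt continuous_const hg.abs).mem_nhds (hxg n))
  obtain ⟨a, haA, ha_inj⟩ := exists_injective_forall_mem hA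
  choose w hw hwa using haA
  have hfw : f ∘ w = a := funext hwa
  obtain ⟨p, hp⟩ := hacc a (fun n => hwa n ▸ (hw n).1) ha_inj
  have hblowup : Tendsto (fun n => |g (w n)|) atTop atTop :=
    tendsto_atTop_mono (fun n => (hw n).2.le) tendsto_natCast_atTop_atTop
  exact hclosed.notMem_closure_range_comp_diff
    (locallyFinite_singleton_of_tendsto_abs hg hblowup) p (hfw ▸ hp)

/-- If `f : X → Y` is a closed continuous surjection and `y` is a q-point, then the boundary
of the fiber `f⁻¹(y)` is relatively pseudocompact. -/
theorem relPseudocompact_frontier_fiber {X : Type u} {Y : Type v}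
    [TopologicalSpace X] [TopologicalSpace Y] [T1Space X] [T1Space Y]
    (f : X → Y) (hf : Continuous f) (hsurj : Function.Surjective f)
    (hclosed : IsClosedMap f) (y : Y) (hy : IsQPoint y) :
    RelPseudocompact (frontier (f ⁻¹' {y})) :=
  relPseudocompact_frontier_fiber_general f hf hclosed y hy
end

section
/- If p is a limit point of a set A in a space X and there is a Gδ-subset G of X containing p with G ∩ (A ∖ {p}) = ∅, then any hereditarily closure-preserving collection of neighbourhoods of p is finite. -/
/-!
Suppose `𝔉` were infinite and pick distinct `F₀, F₁, … ∈ 𝔉`. Writing `G = ⋂ Uₙ` with `Uₙ` open,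
the neighbourhoods `Wₙ = int (Fₙ ∩ Uₙ)` of `p` have no common point in `S = A \ {p}`, so
`S ∩ W₀` is the union of the pieces `Dₙ = S ∩ (Wₙ \ Wₙ₊₁) ⊆ Fₙ`. Since `p ∈ cl (S ∩ W₀)`,
hereditary closure preservation puts `p` in some `cl Dₙ`, which is impossible because `Dₙ`
misses the neighbourhood `Wₙ₊₁` of `p`.
-/

universe u

/-- A family `𝔉` of subsets is hereditarily closure-preserving if for every subfamily `G ⊆ 𝔉`
and every choice of subsets `B F ⊆ F` for `F ∈ G`, the closure of the union is the union of
the closures. -/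
def HCP {X : Type u} [TopologicalSpace X] (𝔉 : Set (Set X)) : Prop :=
  ∀ G ⊆ 𝔉, ∀ B : Set X → Set X, (∀ F ∈ G, B F ⊆ F) →
    closure (⋃ F ∈ G, B F) = ⋃ F ∈ G, closure (B F)

open Set Topology Function

theorem Set.diff_iInter_subset_iUnion_diff_succ {α : Type*} (W : ℕ → Set α) :
    W 0 \ ⋂ n, W n ⊆ ⋃ n, W n \ W (n + 1) := by
  rintro x ⟨hx₀, hx⟩
  by_contra hnot
  refine hx (mem_iInter.2 fun n => ?_)
  induction n with
  | zero => exact hx₀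
  | succ n ih => exact not_not.1 fun hn => hnot (mem_iUnion.2 ⟨n, ih, hn⟩)

namespace HCP

variable {X : Type u} [TopologicalSpace X] {𝔉 : Set (Set X)}

theorem closure_iUnion_of_injective (h𝔉 : HCP 𝔉) {ι : Type*} {f : ι → Set X}
    (hf : Injective f) (hf𝔉 : ∀ i, f i ∈ 𝔉) {B : ι → Set X} (hB : ∀ i, B i ⊆ f i) :
    closure (⋃ i, B i) = ⋃ i, closure (B i) := by
  set B' : Set X → Set X := fun F => ⋃ (i) (_ : f i = F), B i
  have hB' : ∀ i, B' (f i) = B i := fun i => by simp [B', hf.eq_iff]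
  have key := h𝔉 (range f) (range_subset_iff.2 hf𝔉) B' (forall_mem_range.2 fun i => by
    rw [hB']; exact hB i)
  simpa only [biUnion_range, hB'] using key

theorem notMem_closure_of_disjoint_iInter (h𝔉 : HCP 𝔉) {f : ℕ → Set X} (hf : Injective f)
    (hf𝔉 : ∀ n, f n ∈ 𝔉) {p : X} {V : ℕ → Set X} (hV : ∀ n, V n ∈ 𝓝 p)
    (hVf : ∀ n, V n ⊆ f n) {S : Set X} (hS : Disjoint (⋂ n, V n) S) :
    p ∉ closure S := by
  intro hpS
  set W : ℕ → Set X := fun n => interior (V n)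
  have hpW : ∀ n, p ∈ W n := fun n => mem_interior_iff_mem_nhds.2 (hV n)
  set D : ℕ → Set X := fun n => S ∩ (W n \ W (n + 1))
  have hDf : ∀ n, D n ⊆ f n := fun n =>
    inter_subset_right.trans <| sdiff_subset.trans <| interior_subset.trans (hVf n)
  have hSW : S ∩ W 0 ⊆ ⋃ n, D n := by
    intro x ⟨hxS, hxW⟩
    have hxV : x ∉ ⋂ n, W n := fun hx =>
      hS.notMem_of_mem_left (iInter_mono (fun n => interior_subset) hx) hxS
    obtain ⟨n, hn⟩ := mem_iUnion.1 (diff_iInter_subset_iUnion_diff_succ W ⟨hxW, hxV⟩)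
    exact mem_iUnion.2 ⟨n, hxS, hn⟩
  have hpD : p ∈ closure (⋃ n, D n) :=
    closure_mono hSW <| inter_comm S _ ▸ isOpen_interior.inter_closure ⟨hpW 0, hpS⟩
  rw [h𝔉.closure_iUnion_of_injective hf hf𝔉 hDf] at hpD
  obtain ⟨n, hn⟩ := mem_iUnion.1 hpD
  have hDW : D n ⊆ (W (n + 1))ᶜ := fun x hx => hx.2.2
  exact closure_minimal hDW isOpen_interior.isClosed_compl hn (hpW (n + 1))

end HCP

/-- If `p` is a limit point of `A` and some Gδ set `G` contains `p` and misses `A \ {p}`,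
then every hereditarily closure-preserving collection of neighbourhoods of `p` is finite. -/
theorem hcp_nhds_finite {X : Type u} [TopologicalSpace X] (A : Set X) (p : X)
    (hp : p ∈ closure (A \ {p})) (G : Set X) (hG : IsGδ G) (hpG : p ∈ G)
    (hGA : G ∩ (A \ {p}) = ∅)
    (𝔉 : Set (Set X)) (h𝔉 : HCP 𝔉) (hnhds : ∀ F ∈ 𝔉, F ∈ nhds p) :
    𝔉.Finite := by
  by_contra hinf
  obtain ⟨U, hUopen, rfl⟩ := isGδ_iff_eq_iInter_nat.1 hG
  set e := Set.Infinite.natEmbedding 𝔉 hinf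
  have he : Injective fun n => (e n : Set X) := Subtype.val_injective.comp e.injective
  refine h𝔉.notMem_closure_of_disjoint_iInter he (fun n => (e n).2) (V := fun n => e n ∩ U n)
    (fun n => Filter.inter_mem (hnhds _ (e n).2) ((hUopen n).mem_nhds (mem_iInter.1 hpG n)))
    (fun n => inter_subset_left) ?_ hp
  exact (disjoint_iff_inter_eq_empty.2 hGA).mono_left (iInter_mono fun n => inter_subset_right)
end

section
/- If a topological space has a countable almost network, then it is Lindelöf. -/
/-! Given an open cover `U`, every point `x` lies in some `F ∈ N` with `F \ U i` finite for an
`i` such that `x ∈ U i`. Each such `F` is covered by finitely many members of `U`: one for the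
part inside `U i`, one for each of the finitely many remaining points. Countably many `F` cover
the space, so countably many members of `U` do. -/

universe u

/-- `N` is an almost network for `X` if for every `x` and every open neighbourhood `U` of `x`
there is `F ∈ N` with `x ∈ F` and `F \ U` finite. -/
def AlmostNetwork {X : Type u} [TopologicalSpace X] (N : Set (Set X)) : Prop :=
  ∀ x : X, ∀ U : Set X, IsOpen U → x ∈ U → ∃ F ∈ N, x ∈ F ∧ (F \ U).Finite

open Set

section Subcover

variable {α ι : Type*} {U : ι → Set α}

theorem exists_finite_subcover_of_diff_finite (hcov : univ ⊆ ⋃ i, U i) {F : Set α} {i : ι}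
    (hfin : (F \ U i).Finite) : ∃ t : Set ι, t.Finite ∧ F ⊆ ⋃ j ∈ t, U j := by
  obtain ⟨t, ht, hFt⟩ := finite_subset_iUnion hfin ((subset_univ _).trans hcov)
  refine ⟨insert i t, ht.insert i, fun x hxF => ?_⟩
  by_cases hxi : x ∈ U i
  · exact mem_biUnion (mem_insert i t) hxi
  · exact biUnion_mono (subset_insert i t) (fun _ _ => le_rfl) (hFt ⟨hxF, hxi⟩)

theorem exists_countable_subcover_of_subset_biUnion {M : Set (Set α)} (hM : M.Countable)
    {s : Set α} (hs : s ⊆ ⋃ F ∈ M, F) (h : ∀ F ∈ M, ∃ t : Set ι, t.Countable ∧ F ⊆ ⋃ j ∈ t, U j) :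
    ∃ t : Set ι, t.Countable ∧ s ⊆ ⋃ j ∈ t, U j := by
  choose! t ht hFt using h
  refine ⟨⋃ F ∈ M, t F, hM.biUnion ht, hs.trans (iUnion₂_subset fun F hF => ?_)⟩
  exact (hFt F hF).trans (biUnion_mono (subset_biUnion_of_mem hF) fun _ _ => le_rfl)

end Subcover

theorem AlmostNetwork.univ_subset_biUnion_diff_finite {X : Type u} [TopologicalSpace X]
    {N : Set (Set X)} (hnet : AlmostNetwork N) {ι : Type*} {U : ι → Set X}
    (hU : ∀ i, IsOpen (U i)) (hcov : univ ⊆ ⋃ i, U i) :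
    univ ⊆ ⋃ F ∈ {F ∈ N | ∃ i, (F \ U i).Finite}, F := fun x _ => by
  obtain ⟨i, hxi⟩ := mem_iUnion.1 (hcov (mem_univ x))
  obtain ⟨F, hFN, hxF, hfin⟩ := hnet x (U i) (hU i) hxi
  exact mem_biUnion ⟨hFN, i, hfin⟩ hxF

/-- A space with a countable almost network is Lindelöf. -/
theorem lindelof_of_countable_almostNetwork {X : Type u} [TopologicalSpace X]
    (N : Set (Set X)) (hN : N.Countable) (hnet : AlmostNetwork N) :
    LindelofSpace X := by
  refine ⟨isLindelof_iff_countable_subcover.mpr fun U hU hcov => ?_⟩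
  refine exists_countable_subcover_of_subset_biUnion (hN.mono (sep_subset _ _))
    (hnet.univ_subset_biUnion_diff_finite hU hcov) fun F ⟨_, i, hfin⟩ => ?_
  obtain ⟨t, ht, hFt⟩ := exists_finite_subcover_of_diff_finite hcov hfin
  exact ⟨t, ht.countable, hFt⟩
end

section
/- If a countably compact space Y is the image of a submetrizable space X under a closed continuous surjection, then Y is compact. -/
universe u v

/-- `Y` is countably compact: every countable open cover has a finite subcover. -/
def CountablyCompactSpace' (Y : Type v) [TopologicalSpace Y] : Prop :=
  ∀ U : ℕ → Set Y, (∀ n, IsOpen (U n)) → (⋃ n, U n) = Set.univ →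
    ∃ s : Finset ℕ, (⋃ n ∈ s, U n) = Set.univ

/-!
Replace the coarser metrizable topology by a continuous bijection `e : X → M` onto a metric
space and fix a section `s` of `f`. If every tail of a sequence `y` in `Y` has a closed lift
under `e ∘ s` (possibly together with one limit point), then, `f` being closed, every tail of `y`
is closed in `Y`, and countable compactness makes `y` take some value infinitely often. For lifts
without cluster points this is absurd, so `e ∘ s` has relatively compact range in `M`, and the
image of an ultrafilter `𝓤` on `Y` converges to some `e x`. For lifts converging to `e x`, the
repeated value must be `f x`; hence every closed set in `𝓤` contains `f x`, and `𝓤 → f x`.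
-/

open Set Filter Topology Function

theorem Nat.image_Ici_eq_range_add {α : Type*} (u : ℕ → α) (N : ℕ) :
    u '' Ici N = range fun n => u (n + N) := by
  ext z
  constructor
  · rintro ⟨n, hn, rfl⟩
    exact ⟨n - N, by simp only [Nat.sub_add_cancel (mem_Ici.1 hn)]⟩
  · rintro ⟨n, rfl⟩
    exact ⟨n + N, Nat.le_add_left N n, rfl⟩

theorem CountablyCompactSpace'.countablyCompactSpace {Y : Type*} [TopologicalSpace Y]
    (hY : CountablyCompactSpace' Y) : CountablyCompactSpace Y := by
  refine ⟨isCountablyCompact_iff_countable_open_cover.2 fun U hU hcover => ?_⟩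
  obtain ⟨t, ht⟩ := hY U hU (univ_subset_iff.1 hcover)
  exact ⟨t, ht.symm.subset⟩

theorem exists_frequently_eq_of_isClosed_image_Ici {Y : Type*} [TopologicalSpace Y]
    [CountablyCompactSpace Y] (y : ℕ → Y) (h : ∀ N, IsClosed (y '' Ici N)) :
    ∃ a, ∃ᶠ n in atTop, y n = a := by
  obtain ⟨a, -, ha⟩ := CountablyCompactSpace.isCountablyCompact_univ.seq_clusterPt y
    (Eventually.of_forall fun _ => mem_univ _)
  refine ⟨a, frequently_atTop.2 fun N => ?_⟩
  obtain ⟨n, hn, rfl⟩ := (h N).closure_subset (mapClusterPt_atTop_iff_forall_mem_closure.1 ha N)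
  exact ⟨n, hn, rfl⟩

theorem isClosed_image_Ici_of_forall_not_mapClusterPt {M : Type*} [TopologicalSpace M]
    [T1Space M] {u : ℕ → M} (hu : ∀ z, ¬MapClusterPt z atTop u) (N : ℕ) :
    IsClosed (u '' Ici N) := by
  have hfin : LocallyFinite fun n : Ici N => ({u n} : Set M) := fun z => by
    obtain ⟨t, ht, hut⟩ : ∃ t ∈ 𝓝 z, ∀ᶠ n in atTop, u n ∉ t := by
      simpa [mapClusterPt_iff_frequently, not_frequently] using hu z
    refine ⟨t, ht, ?_⟩
    rw [← Nat.cofinite_eq_atTop] at hut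
    exact (hut.preimage Subtype.val_injective.injOn).subset fun n hn => by simpa using hn
  rw [image_eq_range, ← iUnion_singleton_eq_range]
  exact hfin.isClosed_iUnion fun _ => isClosed_singleton

theorem isCompact_closure_range_of_forall_exists_mapClusterPt {α M : Type*}
    [PseudoMetricSpace M] {g : α → M} (h : ∀ y : ℕ → α, ∃ z, MapClusterPt z atTop (g ∘ y)) :
    IsCompact (closure (range g)) := by
  refine IsSeqCompact.isCompact fun u hu => ?_
  have hε : ∀ n : ℕ, (0 : ℝ) < 1 / (n + 1) := fun n => Nat.one_div_pos_of_nat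
  choose y hy using fun n => Metric.mem_closure_range_iff.1 (hu n) _ (hε n)
  obtain ⟨z, hz⟩ := h y
  obtain ⟨φ, hφ, hgyφ⟩ := hz.tendsto_subseq
  have hdist : Tendsto (fun n => dist (g (y n)) (u n)) atTop (𝓝 0) :=
    squeeze_zero (fun _ => dist_nonneg) (fun n => by rw [dist_comm]; exact (hy n).le)
      tendsto_one_div_add_atTop_nhds_zero_nat
  exact ⟨z, mem_closure_of_tendsto hgyφ (Eventually.of_forall fun n => mem_range_self _), φ, hφ,
    hgyφ.congr_dist (hdist.comp hφ.tendsto_atTop)⟩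

theorem Submetrizable.exists_continuous_bijective {X : Type u} [TopologicalSpace X]
    (hX : Submetrizable X) :
    ∃ (M : Type u) (_ : MetricSpace M) (e : X → M), Continuous e ∧ Bijective e := by
  obtain ⟨σ, hle, hσ⟩ := hX
  exact ⟨X, @TopologicalSpace.metrizableSpaceMetric X σ hσ, id, continuous_id_iff_le.2 hle,
    bijective_id⟩

theorem IsClosedMap.isClosed_image_of_isClosed_image {X Y M : Type*} [TopologicalSpace X]
    [TopologicalSpace Y] [TopologicalSpace M] {f : X → Y} {e : X → M} (hf : IsClosedMap f)
    (he : Continuous e) (he' : Injective e) {D : Set X} (hD : IsClosed (e '' D)) :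
    IsClosed (f '' D) :=
  hf _ (he'.preimage_image D ▸ hD.preimage he)

section ClosedMapSection

variable {X Y M : Type*} [TopologicalSpace X] [TopologicalSpace Y] [TopologicalSpace M]
  [CountablyCompactSpace Y] {f : X → Y} {e : X → M} {s : Y → X}

theorem exists_mapClusterPt_comp_section [T1Space M] (hf : IsClosedMap f) (he : Continuous e)
    (he' : Injective e) (hs : RightInverse s f) (y : ℕ → Y) :
    ∃ z, MapClusterPt z atTop (e ∘ s ∘ y) := by
  by_contra! h
  have htail : ∀ N, IsClosed (y '' Ici N) := fun N => by
    have := hf.isClosed_image_of_isClosed_image he he' (D := s '' (y '' Ici N))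
      (by simpa only [image_image, comp_def] using
        isClosed_image_Ici_of_forall_not_mapClusterPt h N)
    simpa only [image_image, hs _] using this
  obtain ⟨a, ha⟩ := exists_frequently_eq_of_isClosed_image_Ici y htail
  exact h (e (s a)) (mapClusterPt_iff_frequently.2 fun _ ht =>
    ha.mono fun n hn => by simp [hn, mem_of_mem_nhds ht])

theorem mem_of_tendsto_comp_section [T2Space M] (hf : IsClosedMap f) (he : Continuous e)
    (he' : Injective e) (hs : RightInverse s f) {C : Set Y} (hC : IsClosed C) {y : ℕ → Y}
    (hyC : ∀ n, y n ∈ C) {x : X} (hy : Tendsto (e ∘ s ∘ y) atTop (𝓝 (e x))) : f x ∈ C := by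
  by_contra hxC
  have htail : ∀ N, IsClosed (y '' Ici N) := fun N => by
    have hcpt : IsCompact (insert (e x) ((e ∘ s ∘ y) '' Ici N)) := by
      rw [Nat.image_Ici_eq_range_add]
      exact ((tendsto_add_atTop_iff_nat N).2 hy).isCompact_insert_range
    have := (hf.isClosed_image_of_isClosed_image he he' (D := insert x (s '' (y '' Ici N)))
      (by simpa only [image_insert_eq, image_image, comp_def] using hcpt.isClosed)).inter hC
    convert this using 1
    ext z
    simp only [image_insert_eq, image_image, hs _, mem_inter_iff, mem_insert_iff]
    constructor
    · rintro ⟨n, hn, rfl⟩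
      exact ⟨Or.inr ⟨n, hn, rfl⟩, hyC n⟩
    · rintro ⟨rfl | hz, hzC⟩
      exacts [absurd hzC hxC, hz]
  obtain ⟨a, ha⟩ := exists_frequently_eq_of_isClosed_image_Ici y htail
  obtain ⟨n, rfl⟩ := ha.exists
  have : e (s (y n)) = e x :=
    tendsto_nhds_unique_of_frequently_eq tendsto_const_nhds hy (ha.mono fun m hm => by simp [hm])
  exact hxC (by rw [← he'.eq_iff.1 this, hs]; exact hyC n)

theorem le_nhds_of_tendsto_comp_section [T2Space M] [FirstCountableTopology M]
    (hf : IsClosedMap f) (he : Continuous e) (he' : Injective e) (hs : RightInverse s f)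
    (𝓤 : Ultrafilter Y) {x : X} (hx : Tendsto (e ∘ s) 𝓤 (𝓝 (e x))) : ↑𝓤 ≤ 𝓝 (f x) := by
  refine le_nhds_iff.2 fun V hxV hV => ?_
  by_contra hVU
  have hVc : Vᶜ ∈ 𝓤 := Ultrafilter.compl_mem_iff_notMem.2 hVU
  have : (comap (e ∘ s) (𝓝 (e x)) ⊓ 𝓟 Vᶜ).NeBot :=
    neBot_of_le (le_inf hx.le_comap (le_principal_iff.2 hVc))
  obtain ⟨y, hy⟩ := (comap (e ∘ s) (𝓝 (e x)) ⊓ 𝓟 Vᶜ).exists_seq_tendsto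
  rw [tendsto_inf, tendsto_comap_iff, tendsto_principal] at hy
  obtain ⟨N, hN⟩ := eventually_atTop.1 hy.2
  exact mem_of_tendsto_comp_section hf he he' hs hV.isClosed_compl
    (fun n => hN (n + N) (Nat.le_add_left N n)) ((tendsto_add_atTop_iff_nat N).2 hy.1) hxV

end ClosedMapSection

theorem compactSpace_of_isClosedMap_of_continuous_bijective {X Y M : Type*} [TopologicalSpace X]
    [TopologicalSpace Y] [MetricSpace M] [CountablyCompactSpace Y] {f : X → Y} {e : X → M}
    (hf : IsClosedMap f) (hsurj : Surjective f) (he : Continuous e) (he' : Bijective e) :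
    CompactSpace Y := by
  have hs := rightInverse_surjInv hsurj
  have hK : IsCompact (closure (range (e ∘ surjInv hsurj))) :=
    isCompact_closure_range_of_forall_exists_mapClusterPt
      (exists_mapClusterPt_comp_section hf he he'.1 hs)
  refine ⟨isCompact_iff_ultrafilter_le_nhds.2 fun 𝓤 _ => ?_⟩
  obtain ⟨m, -, hm⟩ := hK.ultrafilter_le_nhds (𝓤.map (e ∘ surjInv hsurj))
    (le_principal_iff.2 (mem_of_superset (mem_map.2 (univ_mem' fun y => mem_range_self y))
      subset_closure))
  obtain ⟨x, rfl⟩ := he'.2 m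
  exact ⟨f x, mem_univ _, le_nhds_of_tendsto_comp_section hf he he'.1 hs 𝓤 hm⟩

theorem compact_of_countablyCompact_closed_image_general {X : Type u} {Y : Type v}
    [TopologicalSpace X] [TopologicalSpace Y]
    (hX : Submetrizable X) (hY : CountablyCompactSpace' Y)
    (f : X → Y) (hsurj : Function.Surjective f)
    (hclosed : IsClosedMap f) :
    CompactSpace Y := by
  obtain ⟨M, _, e, he, he'⟩ := hX.exists_continuous_bijective
  have := hY.countablyCompactSpace
  exact compactSpace_of_isClosedMap_of_continuous_bijective hclosed hsurj he he'

/-- A countably compact closed continuous image of a submetrizable space is compact. -/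
theorem compact_of_countablyCompact_closed_image {X : Type u} {Y : Type v}
    [TopologicalSpace X] [TopologicalSpace Y] [T1Space X] [T1Space Y]
    (hX : Submetrizable X) (hY : CountablyCompactSpace' Y)
    (f : X → Y) (hf : Continuous f) (hsurj : Function.Surjective f)
    (hclosed : IsClosedMap f) :
    CompactSpace Y :=
  compact_of_countablyCompact_closed_image_general hX hY f hsurj hclosed
end

section
/- Let X be a submetrizable space, Y a functionally Hausdorff, dense-in-itself space with countable pseudocharacter, and f : X → Y an open and closed continuous surjection. Then Y is submetrizable. -/
universe u v

def FunctionallyHausdorff (Y : Type v) [TopologicalSpace Y] : Prop :=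
  ∀ a b : Y, a ≠ b → ∃ g : Y → ℝ, Continuous g ∧ (∀ z, g z ∈ Set.Icc (0:ℝ) 1) ∧
    g a = 0 ∧ g b = 1

/-! Pull a metric back along a continuous injection `φ` of `X` into a metric space; then
`y ↦ closure (φ '' f ⁻¹' {y})`, with the Hausdorff distance, is a continuous injection of `Y` into
a metric space. Everything rests on one observation: open sets `B k` that all meet the fiber over
a non-isolated point `y = ⋂ V k` cannot form a locally finite family. Otherwise the closed sets
`closure (B k) ∩ f ⁻¹' (V k ∩ f '' B (k + 1))ᶜ` would be locally finite, so their union would have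
closed image missing `y`; but a point `z ≠ y` of `f '' B 0` near `y` and off that image then lies
in every `V k`. Balls around a separated sequence in a fiber show that images of fibers are totally
bounded, which with `f` open and closed gives continuity; balls shrinking to a point of another
fiber give injectivity. -/

open Set Filter Topology Metric TopologicalSpace Function
open scoped ENNReal

section Fibers

variable {X Y : Type*} [TopologicalSpace X] [TopologicalSpace Y] {f : X → Y} {y : Y}

def LocallyFiniteOutside {ι : Type*} (B : ι → Set X) (E : Set X) : Prop :=
  ∀ x ∉ E, ∃ W, IsOpen W ∧ x ∈ W ∧ {i | (B i ∩ W).Nonempty}.Finite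

theorem LocallyFiniteOutside.isClosed_iUnion_union {ι : Type*} {B S : ι → Set X} {E : Set X}
    (hB : LocallyFiniteOutside B E) (hE : IsClosed E) (hS : ∀ i, IsClosed (S i))
    (hSB : ∀ i, S i ⊆ closure (B i)) : IsClosed ((⋃ i, S i) ∪ E) := by
  refine isOpen_compl_iff.mp (isOpen_iff_mem_nhds.mpr fun x hx => ?_)
  rw [compl_union] at hx
  obtain ⟨W, hWo, hxW, hfin⟩ := hB x hx.2
  have hnhds : W ∩ Eᶜ ∩ ⋂ i ∈ {i | (B i ∩ W).Nonempty}, (S i)ᶜ ∈ 𝓝 x :=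
    inter_mem (inter_mem (hWo.mem_nhds hxW) (hE.isOpen_compl.mem_nhds hx.2))
      ((biInter_mem hfin).2 fun i _ =>
        (hS i).isOpen_compl.mem_nhds fun hxS => hx.1 (mem_iUnion.2 ⟨i, hxS⟩))
  refine mem_of_superset hnhds ?_
  rintro v ⟨⟨hvW, hvE⟩, hvS⟩
  refine compl_union _ _ ▸ ⟨fun hv => ?_, hvE⟩
  obtain ⟨i, hvi⟩ := mem_iUnion.mp hv
  exact mem_iInter₂.mp hvS i ((closure_inter_open_nonempty_iff hWo).mp ⟨v, hSB i hvi, hvW⟩) hvi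

theorem not_locallyFiniteOutside_of_forall_mem_image (hf : Continuous f)
    (hopen : IsOpenMap f) (hclosed : IsClosedMap f) (hy : (𝓝[≠] y).NeBot)
    (hGδ : IsGδ ({y} : Set Y)) {E : Set X} (hE : IsClosed E) (hyE : y ∉ f '' E)
    {B : ℕ → Set X} (hB : ∀ k, IsOpen (B k)) (hyB : ∀ k, y ∈ f '' B k) :
    ¬LocallyFiniteOutside B E := by
  intro hloc
  obtain ⟨V, hVo, hV⟩ := isGδ_iff_eq_iInter_nat.mp hGδ
  have hyV : ∀ k, y ∈ V k := fun k => mem_iInter.mp (hV ▸ mem_singleton y) k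
  set O : ℕ → Set Y := fun k => V k ∩ f '' B (k + 1)
  have hOo : ∀ k, IsOpen (O k) := fun k => (hVo k).inter (hopen _ (hB (k + 1)))
  set F := f '' ((⋃ k, closure (B k) ∩ f ⁻¹' (O k)ᶜ) ∪ E)
  have hF : IsClosed F := hclosed _ <| hloc.isClosed_iUnion_union hE
    (fun k => isClosed_closure.inter ((hOo k).isClosed_compl.preimage hf))
    fun k => inter_subset_left
  have hyF : y ∉ F := by
    rintro ⟨x, hx | hx, hxy⟩
    · obtain ⟨k, -, hxO⟩ := mem_iUnion.mp hx
      exact hxO (hxy ▸ ⟨hyV k, hyB (k + 1)⟩)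
    · exact hyE ⟨x, hx, hxy⟩
  -- Off `F`, every point of `f '' B k` lies in `V k ∩ f '' B (k + 1)`.
  have hstep : ∀ z ∉ F, ∀ k, z ∈ f '' B k → z ∈ O k := by
    rintro _ hzF k ⟨x, hx, rfl⟩
    by_contra hxO
    exact hzF ⟨x, Or.inl (mem_iUnion.mpr ⟨k, subset_closure hx, hxO⟩), rfl⟩
  obtain ⟨z, hzy, hzF, hz0⟩ : ({y}ᶜ ∩ (Fᶜ ∩ f '' B 0)).Nonempty :=
    hy.nonempty_of_mem <| inter_mem_nhdsWithin _ <|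
      (hF.isOpen_compl.inter (hopen _ (hB 0))).mem_nhds ⟨hyF, hyB 0⟩
  have hzB : ∀ k, z ∈ f '' B k := fun k => Nat.rec hz0 (fun k hk => (hstep z hzF k hk).2) k
  exact hzy (hV ▸ mem_iInter.mpr fun k => (hstep z hzF k (hzB k)).1)

theorem totallyBounded_image_fiber {M : Type*} [PseudoMetricSpace M] {φ : X → M}
    (hφ : Continuous φ) (hf : Continuous f) (hopen : IsOpenMap f) (hclosed : IsClosedMap f)
    (hy : (𝓝[≠] y).NeBot) (hGδ : IsGδ ({y} : Set Y)) :
    TotallyBounded (φ '' (f ⁻¹' {y})) := by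
  rw [Metric.totallyBounded_iff]
  by_contra! hne
  obtain ⟨ε, hε, hcover⟩ := hne
  obtain ⟨p, hp⟩ := seq_of_forall_finite_exists
    (P := fun a t => a ∈ φ '' (f ⁻¹' {y}) ∧ ∀ b ∈ t, ε ≤ dist a b) fun t ht => by
      obtain ⟨a, ha, hat⟩ := not_subset.mp (hcover t ht)
      simp only [mem_iUnion₂, mem_ball, not_exists, not_lt] at hat
      exact ⟨a, ha, hat⟩
  have hsep : Pairwise fun j k => ε ≤ dist (p j) (p k) := by
    intro j k hjk
    rcases hjk.lt_or_gt with h | h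
    · exact dist_comm (p j) (p k) ▸ (hp k).2 _ ⟨j, h, rfl⟩
    · exact (hp j).2 _ ⟨k, h, rfl⟩
  choose x hx hpx using fun k => (hp k).1
  refine not_locallyFiniteOutside_of_forall_mem_image hf hopen hclosed hy hGδ isClosed_empty
    (notMem_empty y ∘ (image_empty f ▸ ·)) (B := fun k => φ ⁻¹' ball (p k) (ε / 4))
    (fun k => isOpen_ball.preimage hφ) (fun k => ⟨x k, by simp [hpx, hε], hx k⟩)
    fun u _ => ⟨φ ⁻¹' ball (φ u) (ε / 4), isOpen_ball.preimage hφ, by simp [hε], ?_⟩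
  refine Set.Subsingleton.finite fun j ⟨v, hvj, hvu⟩ k ⟨w, hwk, hwu⟩ => ?_
  by_contra hjk
  simp only [mem_preimage, mem_ball] at hvj hvu hwk hwu
  have := dist_triangle4 (p j) (φ v) (φ w) (p k)
  linarith [hsep hjk, dist_comm (p j) (φ v), dist_triangle (φ v) (φ u) (φ w),
    dist_comm (φ u) (φ w)]

theorem notMem_closure_image_fiber {M : Type*} [MetricSpace M] {φ : X → M}
    (hφ : Continuous φ) (hφi : Injective φ) (hf : Continuous f) (hopen : IsOpenMap f)
    (hclosed : IsClosedMap f) (hy : (𝓝[≠] y).NeBot) (hGδ : IsGδ ({y} : Set Y)) {x₀ : X}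
    (hx₀ : f x₀ ≠ y) : φ x₀ ∉ closure (φ '' (f ⁻¹' {y})) := by
  intro hmem
  -- Shrinking balls around `φ x₀` all meet the fiber and accumulate only at `x₀`.
  refine not_locallyFiniteOutside_of_forall_mem_image hf hopen hclosed hy hGδ
    (isClosed_singleton.preimage hφ) (fun ⟨x, hx, hxy⟩ => hx₀ (hφi hx ▸ hxy :))
    (B := fun k => φ ⁻¹' ball (φ x₀) (1 / (k + 1))) (fun k => isOpen_ball.preimage hφ)
    (fun k => ?_) fun u hu => ?_
  · obtain ⟨_, ⟨x, hx, rfl⟩, hd⟩ := Metric.mem_closure_iff.mp hmem _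
      (Nat.one_div_pos_of_nat (n := k))
    exact ⟨x, mem_ball'.mpr hd, hx⟩
  · have hc : 0 < dist (φ u) (φ x₀) / 2 := half_pos (dist_pos.mpr hu)
    refine ⟨φ ⁻¹' ball (φ u) (dist (φ u) (φ x₀) / 2), isOpen_ball.preimage hφ,
      by simpa using hc, ?_⟩
    have hsmall := tendsto_one_div_add_atTop_nhds_zero_nat.eventually (gt_mem_nhds hc)
    rw [← Nat.cofinite_eq_atTop, eventually_cofinite] at hsmall
    refine hsmall.subset fun k ⟨v, hvk, hvu⟩ => not_lt.mpr ?_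
    simp only [mem_preimage, mem_ball] at hvk hvu
    linarith [dist_triangle (φ u) (φ v) (φ x₀), dist_comm (φ u) (φ v)]

section Hausdorff

variable {M : Type*} [PseudoEMetricSpace M] {φ : X → M}

theorem IsClosedMap.eventually_infEDist_image_fiber_lt (hclosed : IsClosedMap f)
    (hφ : Continuous φ) {δ : ℝ≥0∞} (hδ : 0 < δ) :
    ∀ᶠ z in 𝓝 y, ∀ a ∈ φ '' (f ⁻¹' {z}), infEDist a (φ '' (f ⁻¹' {y})) < δ := by
  filter_upwards [hclosed.eventually_nhds_fiber y fun x hx =>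
    ((continuous_infEDist.comp hφ).tendsto x).eventually_lt_const
      (infEDist_zero_of_mem (mem_image_of_mem φ hx) ▸ hδ)] with z hz
  rintro _ ⟨x, hx, rfl⟩
  exact hz x hx

theorem IsOpenMap.eventually_infEDist_image_fiber_lt (hopen : IsOpenMap f)
    (hφ : Continuous φ) (htb : TotallyBounded (φ '' (f ⁻¹' {y}))) {δ : ℝ≥0∞} (hδ : 0 < δ) :
    ∀ᶠ z in 𝓝 y, ∀ b ∈ φ '' (f ⁻¹' {y}), infEDist b (φ '' (f ⁻¹' {z})) < δ := by
  obtain ⟨t, hts, htfin, hcover⟩ := EMetric.totallyBounded_iff'.mp htb (δ / 2)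
    (ENNReal.half_pos hδ.ne')
  have hnear : ∀ᶠ z in 𝓝 y, ∀ c ∈ t, z ∈ f '' (φ ⁻¹' eball c (δ / 2)) := by
    refine (eventually_all_finite htfin).mpr fun c hc => ?_
    obtain ⟨x, hx, rfl⟩ := hts hc
    exact (hopen _ (isOpen_eball.preimage hφ)).mem_nhds
      ⟨x, mem_eball_self (ENNReal.half_pos hδ.ne'), hx⟩
  filter_upwards [hnear] with z hz b hb
  obtain ⟨c, hc, hbc⟩ := mem_iUnion₂.mp (hcover hb)
  obtain ⟨v, hvc, rfl⟩ := hz c hc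
  calc infEDist b (φ '' (f ⁻¹' {f v})) ≤ edist b (φ v) := infEDist_le_edist_of_mem ⟨v, rfl, rfl⟩
    _ ≤ edist b c + edist c (φ v) := edist_triangle _ _ _
    _ < δ / 2 + δ / 2 := ENNReal.add_lt_add hbc (mem_eball'.mp hvc)
    _ = δ := ENNReal.add_halves δ

end Hausdorff

end Fibers

section FiberImageClosure

variable {X Y M : Type*}

def fiberImageClosure [TopologicalSpace M] (φ : X → M) (f : X → Y) (z : Y) : Closeds M :=
  ⟨closure (φ '' (f ⁻¹' {z})), isClosed_closure⟩

theorem fiberImageClosure_injective [TopologicalSpace M] {φ : X → M} {f : X → Y}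
    (hsurj : Surjective f)
    (hsep : ∀ x y, f x ≠ y → φ x ∉ closure (φ '' (f ⁻¹' {y}))) :
    Injective (fiberImageClosure φ f) := by
  intro y₁ y₂ h
  obtain ⟨x, rfl⟩ := hsurj y₂
  by_contra hne
  refine hsep x y₁ (Ne.symm hne) ?_
  have hx : φ x ∈ (fiberImageClosure φ f (f x) : Set M) := subset_closure ⟨x, rfl, rfl⟩
  rwa [← h] at hx

theorem continuous_fiberImageClosure [TopologicalSpace X] [TopologicalSpace Y] [EMetricSpace M]
    {φ : X → M} {f : X → Y} (hφ : Continuous φ) (hopen : IsOpenMap f) (hclosed : IsClosedMap f)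
    (htb : ∀ y, TotallyBounded (φ '' (f ⁻¹' {y}))) :
    Continuous (fiberImageClosure φ f) := by
  refine continuous_iff_continuousAt.mpr fun y => ?_
  refine (EMetric.tendsto_nhds (a := fiberImageClosure φ f y)).mpr fun ε hε => ?_
  obtain ⟨δ, hδ, hδε⟩ := exists_between hε
  filter_upwards [hclosed.eventually_infEDist_image_fiber_lt hφ hδ,
    hopen.eventually_infEDist_image_fiber_lt hφ (htb y) hδ] with z hupper hlower
  rw [Closeds.edist_eq, fiberImageClosure, fiberImageClosure, Closeds.coe_mk, Closeds.coe_mk,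
    hausdorffEDist_closure]
  exact (hausdorffEDist_le_of_infEDist (fun a ha => (hupper a ha).le)
    fun b hb => (hlower b hb).le).trans_lt hδε

end FiberImageClosure

theorem Submetrizable.exists_continuous_injective {X : Type u} [TopologicalSpace X]
    (hX : Submetrizable X) :
    ∃ (M : Type u) (_ : MetricSpace M) (φ : X → M), Continuous φ ∧ Injective φ := by
  obtain ⟨σ, hle, hσ⟩ := hX
  exact ⟨X, @metrizableSpaceMetric X σ hσ, id, continuous_id_iff_le.mpr hle, injective_id⟩

theorem submetrizable_of_continuous_injective {Y Z : Type*} [TopologicalSpace Y]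
    [TopologicalSpace Z] [MetrizableSpace Z] {g : Y → Z} (hg : Continuous g)
    (hinj : Injective g) : Submetrizable Y := by
  refine ⟨.induced g ‹_›, continuous_iff_le_induced.mp hg, ?_⟩
  let : TopologicalSpace Y := .induced g ‹_›
  exact (IsEmbedding.induced hinj).metrizableSpace

theorem submetrizable_of_openClosed_image_general {X : Type u} {Y : Type v}
    [TopologicalSpace X] [TopologicalSpace Y]
    (hX : Submetrizable X)
    (hdense : ∀ y : Y, (nhdsWithin y {y}ᶜ).NeBot)
    (hpsi : ∀ y : Y, IsGδ ({y} : Set Y))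
    (f : X → Y) (hf : Continuous f) (hsurj : Function.Surjective f)
    (hopen : IsOpenMap f) (hclosed : IsClosedMap f) :
    Submetrizable Y := by
  obtain ⟨M, _, φ, hφ, hφi⟩ := hX.exists_continuous_injective
  exact submetrizable_of_continuous_injective
    (continuous_fiberImageClosure hφ hopen hclosed fun y =>
      totallyBounded_image_fiber hφ hf hopen hclosed (hdense y) (hpsi y))
    (fiberImageClosure_injective hsurj fun _ y hxy =>
      notMem_closure_image_fiber hφ hφi hf hopen hclosed (hdense y) (hpsi y) hxy)

/-- If `X` is submetrizable, `Y` is functionally Hausdorff, dense-in-itself and has countable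
pseudocharacter, and `f : X → Y` is an open-closed continuous surjection, then `Y` is
submetrizable. -/
theorem submetrizable_of_openClosed_image {X : Type u} {Y : Type v}
    [TopologicalSpace X] [TopologicalSpace Y] [T1Space X] [T1Space Y]
    (hX : Submetrizable X) (hY : FunctionallyHausdorff Y)
    (hdense : ∀ y : Y, (nhdsWithin y {y}ᶜ).NeBot)
    (hpsi : ∀ y : Y, IsGδ ({y} : Set Y))
    (f : X → Y) (hf : Continuous f) (hsurj : Function.Surjective f)
    (hopen : IsOpenMap f) (hclosed : IsClosedMap f) :
    Submetrizable Y :=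
  submetrizable_of_openClosed_image_general hX hdense hpsi f hf hsurj hopen hclosed
end

section
/- There exist a submetrizable space X, a regular, first-countable, non-submetrizable space Y, and a continuous surjection f : X → Y that is both open and closed. -/
universe u

/-!
Points over irrationals are isolated in both spaces, so only the rational fibres `{q} × [0,1]`
matter. There `f` is continuous because `Y` carries the Euclidean neighbourhoods of `q`; it is open
because every neighbourhood of `(q, t)` contains, above each nearby `x`, parameters from both `I₀` and
`I₁`; it is closed by the tube lemma for the compact fibre.

A submetrizable space has a Gδ diagonal. In `Y` the map `x ↦ (first x, second x)` into `Y × Y` is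
continuous at each rational, where it meets the diagonal, so by the Baire category theorem the
preimage of a Gδ diagonal would be residual in `ℝ` and would contain an irrational `x`, at which the
two copies differ.
-/

open Set Filter Topology TopologicalSpace

namespace TopologicalSpace

@[reducible] def isolate {α : Type*} (t : TopologicalSpace α) (A : Set α) : TopologicalSpace α where
  IsOpen O := ∀ p ∈ O, p ∉ A → O ∈ @nhds α t p
  isOpen_univ _ _ _ := univ_mem
  isOpen_inter _ _ h₁ h₂ p hp hpA := inter_mem (h₁ p hp.1 hpA) (h₂ p hp.2 hpA)
  isOpen_sUnion S hS := by
    rintro p ⟨O, hO, hpO⟩ hpA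
    exact mem_of_superset (hS O hO p hpO hpA) (subset_sUnion_of_mem hO)

variable {α : Type*} {t : TopologicalSpace α} {A : Set α} {p : α}

theorem isolate_le : isolate t A ≤ t :=
  fun _ hO _ hp _ => hO.mem_nhds hp

theorem nhds_isolate_of_mem (hp : p ∈ A) : @nhds α (isolate t A) p = pure p := by
  refine le_antisymm (le_pure_iff.2 ?_) (@pure_le_nhds α (isolate t A) p)
  refine @IsOpen.mem_nhds α (isolate t A) p {p} ?_ rfl
  rintro q rfl hqA
  exact absurd hp hqA

theorem nhds_isolate_of_notMem (hp : p ∉ A) : @nhds α (isolate t A) p = @nhds α t p := by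
  refine le_antisymm (nhds_mono isolate_le) fun s hs => ?_
  obtain ⟨O, hOs, hO, hpO⟩ := (@mem_nhds_iff α (isolate t A) p s).1 hs
  exact mem_of_superset (hO p hpO hp) hOs

theorem firstCountableTopology_isolate [@FirstCountableTopology α t] :
    @FirstCountableTopology α (isolate t A) := by
  refine @FirstCountableTopology.mk α (isolate t A) fun p => ?_
  by_cases hp : p ∈ A
  · rw [nhds_isolate_of_mem hp]; infer_instance
  · rw [nhds_isolate_of_notMem hp]; infer_instance

theorem regularSpace_isolate [@RegularSpace α t] (h : @T1Space α (isolate t A)) :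
    @RegularSpace α (isolate t A) := by
  let := isolate t A
  refine .of_exists_mem_nhds_isClosed_subset fun a s hs => ?_
  by_cases ha : a ∈ A
  · refine ⟨{a}, ?_, isClosed_singleton, singleton_subset_iff.2 (mem_of_mem_nhds hs)⟩
    rw [nhds_isolate_of_mem ha]
    exact mem_pure.2 rfl
  · rw [nhds_isolate_of_notMem ha] at hs ⊢
    obtain ⟨u, hu, huc, hus⟩ := @exists_mem_nhds_isClosed_subset α t _ a s hs
    exact ⟨u, hu, huc.mono isolate_le, hus⟩

theorem submetrizable_isolate [@MetrizableSpace α t] : @Submetrizable α (isolate t A) :=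
  ⟨t, isolate_le, ‹_›⟩

end TopologicalSpace

theorem Submetrizable.isGδ_diagonal {X : Type*} [t : TopologicalSpace X] (h : Submetrizable X) :
    IsGδ (diagonal X) := by
  obtain ⟨σ, hle, hσ⟩ := h
  have hσ_diag : @IsGδ (X × X) (@instTopologicalSpaceProd X X σ σ) (diagonal X) :=
    @IsClosed.isGδ _ (@instTopologicalSpaceProd X X σ σ) _ _ (@isClosed_diagonal X σ _)
  have hid : @Continuous (X × X) (X × X) (@instTopologicalSpaceProd X X t t)
      (@instTopologicalSpaceProd X X σ σ) (Prod.map id id) :=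
    @Continuous.prodMap X X X X σ σ t t id id (continuous_id_of_le hle) (continuous_id_of_le hle)
  exact @IsGδ.preimage _ _ (@instTopologicalSpaceProd X X t t) (@instTopologicalSpaceProd X X σ σ)
    _ _ hid hσ_diag

theorem preimage_mem_residual_of_isGδ {X Z : Type*} [TopologicalSpace X] [TopologicalSpace Z]
    {g : X → Z} {D : Set X} {S : Set Z} (hD : Dense D) (hg : ∀ x ∈ D, ContinuousAt g x)
    (hS : IsGδ S) (hDS : MapsTo g D S) : g ⁻¹' S ∈ residual X := by
  obtain ⟨T, hT_open, hT_count, rfl⟩ := hS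
  rw [preimage_sInter]
  refine (countable_bInter_mem hT_count).2 fun U hU => ?_
  have hD_int : D ⊆ interior (g ⁻¹' U) := fun x hx =>
    mem_interior_iff_mem_nhds.2 <| hg x hx <| (hT_open U hU).mem_nhds <| hDS hx U hU
  exact mem_of_superset (residual_of_dense_open isOpen_interior (hD.mono hD_int)) interior_subset

/-- The space `Y`: two copies of `ℝ` glued along `ℚ`. `copy` says which copy a point lies in; the
rational points exist only in copy `false`. -/
@[ext]
structure DoubledMichaelLine where
  pt : ℝ
  copy : Bool
  irrational_of_copy : copy = true → Irrational pt

namespace DoubledMichaelLine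

-- The quotient topology: a rational point keeps the Euclidean neighbourhoods of both copies.
instance : TopologicalSpace DoubledMichaelLine :=
  isolate (induced pt inferInstance) {y | Irrational y.pt}

def first (x : ℝ) : DoubledMichaelLine := ⟨x, false, nofun⟩

open Classical in
noncomputable def second (x : ℝ) : DoubledMichaelLine :=
  ⟨x, decide (Irrational x), of_decide_eq_true⟩

@[simp] theorem pt_first (x : ℝ) : (first x).pt = x := rfl

@[simp] theorem pt_second (x : ℝ) : (second x).pt = x := rfl

theorem second_eq_first {x : ℝ} (hx : ¬Irrational x) : second x = first x := by
  ext <;> simp [second, first, hx]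

theorem first_ne_second {x : ℝ} (hx : Irrational x) : first x ≠ second x := by
  intro h
  simpa [first, second, hx] using congrArg copy h

theorem eq_of_pt_eq {y z : DoubledMichaelLine} (h : y.pt = z.pt) (hz : ¬Irrational z.pt) :
    y = z := by
  have hy : y.copy = false := by simpa using mt y.irrational_of_copy (h ▸ hz)
  have hz : z.copy = false := by simpa using mt z.irrational_of_copy hz
  ext <;> simp [h, hy, hz]

theorem nhds_of_irrational {y : DoubledMichaelLine} (hy : Irrational y.pt) : 𝓝 y = pure y :=
  nhds_isolate_of_mem hy

theorem nhds_of_not_irrational {y : DoubledMichaelLine} (hy : ¬Irrational y.pt) :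
    𝓝 y = comap pt (𝓝 y.pt) :=
  (nhds_isolate_of_notMem hy).trans (nhds_induced pt y)

theorem tendsto_nhds_of_not_irrational {α : Type*} {g : α → DoubledMichaelLine} {l : Filter α}
    {y : DoubledMichaelLine} (hy : ¬Irrational y.pt) :
    Tendsto g l (𝓝 y) ↔ Tendsto (pt ∘ g) l (𝓝 y.pt) := by
  rw [nhds_of_not_irrational hy, tendsto_comap_iff]

theorem continuousAt_of_forall_pt_eq {g : ℝ → DoubledMichaelLine} (hg : ∀ x, (g x).pt = x) {q : ℝ}
    (hq : ¬Irrational q) : ContinuousAt g q := by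
  rw [ContinuousAt, tendsto_nhds_of_not_irrational (by rwa [hg]), hg, Function.comp_def]
  simp only [hg]
  exact tendsto_id

instance : T1Space DoubledMichaelLine := by
  refine t1Space_iff_specializes_imp_eq.2 fun y z hyz => ?_
  rw [specializes_iff_pure] at hyz
  by_cases hz : Irrational z.pt
  · rw [nhds_of_irrational hz] at hyz
    exact le_pure_iff.1 hyz
  · rw [nhds_of_not_irrational hz, ← map_le_iff_le_comap, Filter.map_pure,
      ← specializes_iff_pure] at hyz
    exact eq_of_pt_eq hyz.eq hz

instance : RegularSpace DoubledMichaelLine :=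
  @regularSpace_isolate _ _ _ (regularSpace_induced pt) inferInstance

instance : FirstCountableTopology DoubledMichaelLine :=
  @firstCountableTopology_isolate _ _ _ (firstCountableTopology_induced _ ℝ pt)

theorem not_isGδ_diagonal : ¬IsGδ (diagonal DoubledMichaelLine) := by
  intro h
  have hres : (fun x => (first x, second x)) ⁻¹' diagonal _ ∈ residual ℝ := by
    refine preimage_mem_residual_of_isGδ Rat.denseRange_cast (fun _ hq => ?_) h ?_
    · exact (continuousAt_of_forall_pt_eq pt_first fun h => h hq).prodMk
        (continuousAt_of_forall_pt_eq pt_second fun h => h hq)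
    · rintro _ ⟨q, rfl⟩
      exact (second_eq_first (Rat.not_irrational q)).symm
  obtain ⟨x, hx, hirr⟩ :=
    (dense_of_mem_residual (inter_mem hres eventually_residual_irrational)).nonempty
  exact first_ne_second hirr hx

theorem not_submetrizable : ¬Submetrizable DoubledMichaelLine :=
  fun h => not_isGδ_diagonal h.isGδ_diagonal

end DoubledMichaelLine

theorem Dense.preimage_coe_unitInterval {s : Set ℝ} (hs : Dense s) :
    Dense (((↑) : unitInterval → ℝ) ⁻¹' s) := by
  rw [Subtype.dense_iff, Subtype.image_preimage_coe]
  calc Icc (0 : ℝ) 1 = closure (Ioo 0 1) := (closure_Ioo zero_ne_one).symm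
    _ ⊆ closure (Ioo 0 1 ∩ s) :=
      closure_minimal (hs.open_subset_closure_inter isOpen_Ioo) isClosed_closure
    _ ⊆ closure (Icc 0 1 ∩ s) := closure_mono (inter_subset_inter_left _ Ioo_subset_Icc_self)

/-- The space `X`. -/
def MichaelStrip : Type := ℝ × unitInterval

namespace MichaelStrip

instance : TopologicalSpace MichaelStrip :=
  isolate (inferInstance : TopologicalSpace (ℝ × unitInterval)) {p | Irrational p.1}

theorem nhds_of_irrational {p : MichaelStrip} (hp : Irrational p.1) : 𝓝 p = pure p :=
  nhds_isolate_of_mem hp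

theorem nhds_of_not_irrational {p : MichaelStrip} (hp : ¬Irrational p.1) :
    𝓝 p = 𝓝 p.1 ×ˢ 𝓝 p.2 :=
  (nhds_isolate_of_notMem hp).trans (nhds_prod_eq (x := p.1) (y := p.2))

theorem submetrizable : Submetrizable MichaelStrip :=
  @submetrizable_isolate (ℝ × unitInterval) _ _ _

open Classical in
/-- The map `f`, with `I₀` the rational and `I₁` the irrational points of `[0,1]`. -/
noncomputable def toDoubledMichaelLine (p : MichaelStrip) : DoubledMichaelLine :=
  if Irrational (p.2 : ℝ) then .second p.1 else .first p.1

@[simp] theorem pt_toDoubledMichaelLine (p : MichaelStrip) :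
    (toDoubledMichaelLine p).pt = p.1 := by
  unfold toDoubledMichaelLine; split_ifs <;> rfl

theorem dense_setOf_toDoubledMichaelLine_eq (y : DoubledMichaelLine) :
    Dense {t : unitInterval | toDoubledMichaelLine (y.pt, t) = y} := by
  obtain ⟨x, _ | _, hx⟩ := y
  · refine (Dense.preimage_coe_unitInterval Rat.denseRange_cast).mono fun t ht => ?_
    have ht : ¬Irrational (t : ℝ) := fun h => h ht
    simp [toDoubledMichaelLine, DoubledMichaelLine.first, ht]
  · refine dense_irrational.preimage_coe_unitInterval.mono fun t (ht : Irrational (t : ℝ)) => ?_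
    simp [toDoubledMichaelLine, DoubledMichaelLine.second, ht, hx rfl]

theorem surjective_toDoubledMichaelLine : Function.Surjective toDoubledMichaelLine := fun y =>
  let ⟨t, ht⟩ := (dense_setOf_toDoubledMichaelLine_eq y).nonempty
  ⟨(y.pt, t), ht⟩

theorem continuous_toDoubledMichaelLine : Continuous toDoubledMichaelLine := by
  refine continuous_iff_continuousAt.2 fun p => ?_
  by_cases hp : Irrational p.1
  · rw [ContinuousAt, nhds_of_irrational hp]
    exact tendsto_pure_nhds _ _
  · rw [ContinuousAt, DoubledMichaelLine.tendsto_nhds_of_not_irrational (by simpa using hp),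
      nhds_of_not_irrational hp, pt_toDoubledMichaelLine]
    exact tendsto_fst.congr fun q => (pt_toDoubledMichaelLine q).symm

theorem isOpenMap_toDoubledMichaelLine : IsOpenMap toDoubledMichaelLine := by
  refine IsOpenMap.of_nhds_le fun p => ?_
  by_cases hp : Irrational p.1
  · rw [DoubledMichaelLine.nhds_of_irrational (by simpa using hp), ← Filter.map_pure]
    exact map_mono (pure_le_nhds p)
  · rw [DoubledMichaelLine.nhds_of_not_irrational (by simpa using hp), nhds_of_not_irrational hp]
    intro s hs
    obtain ⟨U, hU, V, hV, hUV⟩ := mem_prod_iff.1 (mem_map.1 hs)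
    refine mem_comap.2 ⟨U, by simpa using hU, fun y hy => ?_⟩
    obtain ⟨t, ht, htV⟩ := (dense_setOf_toDoubledMichaelLine_eq y).inter_nhds_nonempty hV
    exact ht ▸ hUV (mk_mem_prod hy htV)

theorem isClosedMap_toDoubledMichaelLine : IsClosedMap toDoubledMichaelLine := by
  intro C hC
  refine isOpen_compl_iff.1 <| isOpen_iff_mem_nhds.2 fun y hy => ?_
  by_cases hyr : Irrational y.pt
  · rw [DoubledMichaelLine.nhds_of_irrational hyr]
    exact mem_pure.2 hy
  · have hfiber : ∀ t : unitInterval, ∀ᶠ z : ℝ × unitInterval in 𝓝 (y.pt, t), z ∉ C := by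
      intro t
      have hnotC : ((y.pt, t) : MichaelStrip) ∉ C := fun hmem =>
        hy ⟨_, hmem, DoubledMichaelLine.eq_of_pt_eq (pt_toDoubledMichaelLine _) hyr⟩
      have := hC.isOpen_compl.mem_nhds hnotC
      rwa [nhds_of_not_irrational (p := (y.pt, t)) hyr, ← nhds_prod_eq] at this
    have htube := isCompact_univ.eventually_forall_of_forall_eventually
      (P := fun x t => ((x, t) : ℝ × unitInterval) ∉ C) fun t _ => hfiber t
    rw [DoubledMichaelLine.nhds_of_not_irrational hyr]
    refine mem_comap.2 ⟨_, htube, ?_⟩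
    rintro _ hz ⟨p, hpC, rfl⟩
    rw [mem_preimage, pt_toDoubledMichaelLine] at hz
    exact hz p.2 trivial hpC

end MichaelStrip

/-- There exist a submetrizable space `X`, a regular first-countable space `Y` that is not
submetrizable, and an open-closed continuous surjection `f : X → Y`. -/
theorem exists_openClosed_image_not_submetrizable :
    ∃ (X Y : Type) (tX : TopologicalSpace X) (tY : TopologicalSpace Y) (f : X → Y),
      @Submetrizable X tX ∧
      @T1Space Y tY ∧ @RegularSpace Y tY ∧
      @FirstCountableTopology Y tY ∧
      ¬ @Submetrizable Y tY ∧
      @Continuous X Y tX tY f ∧ Function.Surjective f ∧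
      @IsOpenMap X Y tX tY f ∧ @IsClosedMap X Y tX tY f :=
  ⟨MichaelStrip, DoubledMichaelLine, inferInstance, inferInstance,
    MichaelStrip.toDoubledMichaelLine, MichaelStrip.submetrizable, inferInstance, inferInstance,
    inferInstance, DoubledMichaelLine.not_submetrizable,
    MichaelStrip.continuous_toDoubledMichaelLine, MichaelStrip.surjective_toDoubledMichaelLine,
    MichaelStrip.isOpenMap_toDoubledMichaelLine, MichaelStrip.isClosedMap_toDoubledMichaelLine⟩
end
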